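/- arXiv:1203.4322 — 2 statements merged into one kernel-verified Lean document; each statement's English description precedes it below -/
import Mathlib

section
/- Let P be a multiset of N points in [0,1)^s and r ∈ ℕ. If the dual set D_r(P) = {k ∈ {0,...,b^r-1}^s : ∑_{h} wal_k(x_h) ≠ 0} equals {0}, then every elementary interval E_a, a ∈ {0,...,b^r-1}^s, contains exactly N b^{-rs} points of P; in particular b^{rs} divides N. Consequently, if b^{rs} > N then D_r(P) ≠ {0}. -/
/-- The `i`-th base-`b` digit (`i ≥ 1`) of a real number `x ∈ [0,1)`. -/
noncomputable def rdigit (b : ℕ) (x : ℝ) (i : ℕ) : ℤ := ⌊x * (b : ℝ) ^ i⌋ % (b : ℤ)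

/-- The `k`-th `b`-adic Walsh function. -/
noncomputable def wal (b k : ℕ) (x : ℝ) : ℂ :=
  Complex.exp ((2 * Real.pi * Complex.I / (b : ℂ)) *
    ((∑ j ∈ Finset.range k, rdigit b x (j + 1) * ((k / b ^ j % b : ℕ) : ℤ) : ℤ) : ℂ))

/-- The `s`-dimensional `b`-adic Walsh function. -/
noncomputable def walVec (b : ℕ) {s : ℕ} (k : Fin s → ℕ) (x : Fin s → ℝ) : ℂ :=
  ∏ j, wal b (k j) (x j)

/-!
For `k < b ^ r` and `x ≥ 0`, `wal b k x` depends on `x` only through the cell index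
`m = ⌊x b^r⌋`: written in the `r` base-`b` digits of `k` and `m`, it is a character of `(ℤ/b)^r`.
Orthogonality of characters gives `∑_k wal_k(x) · conj (wal_k(y)) = b^r · [⌊x b^r⌋ = ⌊y b^r⌋]`,
and coordinatewise the same holds in dimension `s` with constant `b^{rs}`. So for `y ∈ E_a`,
`∑_k conj (wal_k(y)) · ∑_h wal_k(x_h)` is `b^{rs}` times the number of points in `E_a`; if every
coefficient with `k ≠ 0` vanishes, only `k = 0` contributes and the sum is `N`.
-/

open Finset ComplexConjugate

section OrthogonalKernel

variable {K M : Type*} [Fintype K] [DecidableEq M]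

def IsOrthogonalKernel (W : K → M → ℂ) (c : ℂ) : Prop :=
  ∀ m m', ∑ k, W k m * conj (W k m') = if m = m' then c else 0

theorem IsOrthogonalKernel.comp {K' M' : Type*} [Fintype K'] [DecidableEq M']
    {W : K → M → ℂ} {c : ℂ} (hW : IsOrthogonalKernel W c) {e : K' → K} (he : e.Bijective)
    {f : M' → M} (hf : f.Injective) : IsOrthogonalKernel (fun k m => W (e k) (f m)) c := by
  intro m m'
  rw [he.sum_comp (fun k => W k (f m) * conj (W k (f m'))), hW]
  exact if_congr hf.eq_iff rfl rfl

theorem IsOrthogonalKernel.pi {ι : Type*} [Fintype ι] [DecidableEq ι]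
    {W : K → M → ℂ} {c : ℂ} (hW : IsOrthogonalKernel W c) :
    IsOrthogonalKernel (fun (k : ι → K) (m : ι → M) => ∏ i, W (k i) (m i))
      (c ^ Fintype.card ι) := by
  intro m m'
  calc ∑ k : ι → K, (∏ i, W (k i) (m i)) * conj (∏ i, W (k i) (m' i))
      = ∏ i, ∑ k, W k (m i) * conj (W k (m' i)) := by
        simp only [map_prod, ← prod_mul_distrib, Fintype.prod_sum]
    _ = if m = m' then c ^ Fintype.card ι else 0 := by
        simp only [hW _ _, prod_ite_zero, mem_univ, forall_const, prod_const, card_univ, funext_iff]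

theorem IsOrthogonalKernel.card_filter_mul {ι : Type*} [Fintype ι] {W : K → M → ℂ} {c : ℂ}
    (hW : IsOrthogonalKernel W c) {k₀ : K} (hk₀ : ∀ m, W k₀ m = 1) (p : ι → M)
    (hp : ∀ k ≠ k₀, ∑ h, W k (p h) = 0) (a : M) :
    (#{h | p h = a} : ℂ) * c = Fintype.card ι := by
  calc (#{h | p h = a} : ℂ) * c
      = ∑ h, ∑ k, W k (p h) * conj (W k a) := by
        simp only [hW _ a, sum_ite, sum_const_zero, add_zero, sum_const, nsmul_eq_mul]
    _ = ∑ k, (∑ h, W k (p h)) * conj (W k a) := by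
        simp only [sum_comm (γ := ι), sum_mul]
    _ = Fintype.card ι := by
        rw [sum_eq_single k₀ (fun k _ hk => by rw [hp k hk, zero_mul]) (by simp)]
        simp [hk₀]

end OrthogonalKernel

section Walsh

open ZMod

variable {b : ℕ}

def digitVec (b r n : ℕ) : Fin r → ZMod b := fun j => ((n / b ^ (j : ℕ) : ℕ) : ZMod b)

theorem digitVec_zero (r : ℕ) : digitVec b r 0 = 0 := by
  ext j; simp [digitVec]

theorem digitVec_injective (r : ℕ) :
    Function.Injective (fun k : Fin (b ^ r) => digitVec b r k) := by
  intro k k' h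
  rw [← finFunctionFinEquiv.apply_symm_apply k, ← finFunctionFinEquiv.apply_symm_apply k']
  congr 1
  ext j
  simpa [digitVec, finFunctionFinEquiv_symm_apply_val, ZMod.natCast_eq_natCast_iff']
    using congrFun h j

variable [NeZero b]

theorem digitVec_bijective (r : ℕ) :
    Function.Bijective (fun k : Fin (b ^ r) => digitVec b r k) :=
  (Fintype.bijective_iff_injective_and_card _).mpr ⟨digitVec_injective r, by simp⟩

theorem isOrthogonalKernel_stdAddChar_mul :
    IsOrthogonalKernel (fun t u : ZMod b => stdAddChar (t * u)) b := by
  intro u u'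
  simp only [← AddChar.map_neg_eq_conj, ← AddChar.map_add_eq_mul, ← mul_neg, ← mul_add,
    ← sub_eq_add_neg, AddChar.sum_mulShift _ (isPrimitive_stdAddChar b), sub_eq_zero, ZMod.card,
    Nat.cast_ite, Nat.cast_zero]

-- The `j`-th digit of `k` meets the `(j + 1)`-th digit of `x`, which is the `(r - 1 - j)`-th
-- digit of the cell index `m = ⌊x b^r⌋`.
noncomputable def walshKernel (b : ℕ) [NeZero b] (r k m : ℕ) : ℂ :=
  ∏ j : Fin r, stdAddChar (digitVec b r k j * digitVec b r m j.rev)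

theorem walshKernel_zero_left (r m : ℕ) : walshKernel b r 0 m = 1 := by
  simp [walshKernel, digitVec_zero]

theorem isOrthogonalKernel_walshKernel (r : ℕ) :
    IsOrthogonalKernel (fun k m : Fin (b ^ r) => walshKernel b r k m) ((b : ℂ) ^ r) := by
  have := (isOrthogonalKernel_stdAddChar_mul (b := b)).pi (ι := Fin r)
  rw [Fintype.card_fin] at this
  exact this.comp (digitVec_bijective r)
    ((Fin.rev_surjective.injective_comp_right).comp (digitVec_injective r))

theorem floor_mul_pow_eq_natCast_div {x : ℝ} (hx : 0 ≤ x) {i r : ℕ} (hir : i ≤ r) :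
    ⌊x * (b : ℝ) ^ i⌋ = ((⌊x * (b : ℝ) ^ r⌋₊ / b ^ (r - i) : ℕ) : ℤ) := by
  have hsplit : x * (b : ℝ) ^ r = x * (b : ℝ) ^ i * ((b ^ (r - i) : ℕ) : ℝ) := by
    rw [Nat.cast_pow, mul_assoc, ← pow_add, Nat.add_sub_cancel' hir]
  rw [Int.natCast_div, Int.natCast_floor_eq_floor (by positivity), hsplit, ← Int.floor_div_natCast,
    mul_div_cancel_right₀ _ (Nat.cast_ne_zero.2 (pow_ne_zero _ (NeZero.ne b)))]

theorem rdigit_cast_eq_digitVec {x : ℝ} (hx : 0 ≤ x) {r : ℕ} (j : Fin r) :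
    (rdigit b x (j + 1) : ZMod b) = digitVec b r ⌊x * (b : ℝ) ^ r⌋₊ j.rev := by
  rw [rdigit, ZMod.intCast_mod, floor_mul_pow_eq_natCast_div hx j.isLt, digitVec, Fin.val_rev]
  exact Int.cast_natCast _

theorem wal_eq_walshKernel (hb : 1 < b) {r k : ℕ} (hk : k < b ^ r) {x : ℝ} (hx : 0 ≤ x) :
    wal b k x = walshKernel b r k ⌊x * (b : ℝ) ^ r⌋₊ := by
  set F : ℕ → ℤ := fun j => rdigit b x (j + 1) * ((k / b ^ j % b : ℕ) : ℤ)
  have hF : ∀ j, min k r ≤ j → F j = 0 := by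
    intro j hj
    have : k < b ^ j := by
      rcases min_le_iff.mp hj with hkj | hrj
      · exact (Nat.lt_pow_self hb).trans_le (Nat.pow_le_pow_right (by omega) hkj)
      · exact hk.trans_le (Nat.pow_le_pow_right (by omega) hrj)
    simp only [F, Nat.div_eq_of_lt this, Nat.zero_mod, Nat.cast_zero, mul_zero]
  have hrange : ∑ j ∈ range k, F j = ∑ j ∈ range r, F j := by
    rw [← sum_subset (range_subset_range.2 (min_le_left k r)),
      ← sum_subset (range_subset_range.2 (min_le_right k r))] <;>
    · intro j _ hj
      exact hF j (not_lt.mp (mem_range.not.mp hj))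
  calc wal b k x = ∏ j ∈ range r, stdAddChar (F j : ZMod b) := by
        rw [wal, hrange, Int.cast_sum, mul_sum, Complex.exp_sum]
        refine prod_congr rfl fun j _ => ?_
        rw [stdAddChar_coe]
        ring_nf
    _ = walshKernel b r k ⌊x * (b : ℝ) ^ r⌋₊ := by
        rw [← Fin.prod_univ_eq_prod_range, walshKernel]
        refine prod_congr rfl fun j _ => ?_
        rw [Int.cast_mul, rdigit_cast_eq_digitVec hx, Int.cast_natCast, ZMod.natCast_mod, mul_comm]
        rfl

theorem natFloor_mul_pow_lt {x : ℝ} (hx : x ∈ Set.Ico (0 : ℝ) 1) (r : ℕ) :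
    ⌊x * (b : ℝ) ^ r⌋₊ < b ^ r := by
  rw [Nat.floor_lt (by have := hx.1; positivity), Nat.cast_pow]
  exact mul_lt_of_lt_one_left (pow_pos (Nat.cast_pos.2 (NeZero.pos b)) r) hx.2

theorem walVec_eq_prod_walshKernel (hb : 1 < b) {r s : ℕ}
    (k : Fin s → Fin (b ^ r)) {x : Fin s → ℝ} (hx : ∀ j, 0 ≤ x j) :
    walVec b (fun j => (k j : ℕ)) x = ∏ j, walshKernel b r (k j) ⌊x j * (b : ℝ) ^ r⌋₊ :=
  prod_congr rfl fun j _ => wal_eq_walshKernel hb (k j).isLt (hx j)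

end Walsh

theorem card_cell_mul_pow_eq_of_dual_trivial {b r s N : ℕ} (hb : 2 ≤ b)
    {P : Fin N → Fin s → ℝ} (hP : ∀ h j, P h j ∈ Set.Ico (0 : ℝ) 1)
    (hD : ∀ k : Fin s → Fin (b ^ r), (∃ j, (k j : ℕ) ≠ 0) →
      ∑ h, walVec b (fun j => (k j : ℕ)) (P h) = 0) (a : Fin s → Fin (b ^ r)) :
    #{h | ∀ j, ⌊P h j * (b : ℝ) ^ r⌋ = ((a j : ℕ) : ℤ)} * b ^ (r * s) = N := by
  have : NeZero b := ⟨by omega⟩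
  let p : Fin N → Fin s → Fin (b ^ r) := fun h j => ⟨_, natFloor_mul_pow_lt (hP h j) r⟩
  have hcell : ∀ h, p h = a ↔ ∀ j, ⌊P h j * (b : ℝ) ^ r⌋ = ((a j : ℕ) : ℤ) := fun h => by
    refine funext_iff.trans (forall_congr' fun j => ?_)
    rw [Fin.ext_iff, ← Nat.cast_inj (R := ℤ),
      Int.natCast_floor_eq_floor (mul_nonneg (hP h j).1 (by positivity))]
  have hk₀ : ∀ m : Fin s → Fin (b ^ r), ∏ j, walshKernel b r (0 : Fin (b ^ r)) (m j) = 1 := by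
    simp [walshKernel_zero_left]
  have hp : ∀ k : Fin s → Fin (b ^ r), k ≠ 0 → ∑ h, ∏ j, walshKernel b r (k j) (p h j) = 0 := by
    intro k hk
    obtain ⟨j, hj⟩ := Function.ne_iff.mp hk
    rw [← hD k ⟨j, Fin.val_ne_iff.mpr hj⟩]
    exact sum_congr rfl fun h _ =>
      (walVec_eq_prod_walshKernel (by omega) k fun j => (hP h j).1).symm
  have hcount := ((isOrthogonalKernel_walshKernel r).pi (ι := Fin s)).card_filter_mul hk₀ p hp a
  simp only [hcell, Fintype.card_fin, ← pow_mul] at hcount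
  exact_mod_cast hcount

theorem trivial_dual_set_general (b r s N : ℕ) (hb : 2 ≤ b) (hN : 1 ≤ N)
    (P : Fin N → Fin s → ℝ) (hP : ∀ h j, P h j ∈ Set.Ico (0 : ℝ) 1) :
    ((∀ k : Fin s → Fin (b ^ r), (∃ j, (k j : ℕ) ≠ 0) →
        ∑ h, walVec b (fun j => (k j : ℕ)) (P h) = 0) →
      (∀ a : Fin s → Fin (b ^ r),
        (Finset.univ.filter
          (fun h : Fin N => ∀ j, ⌊P h j * (b : ℝ) ^ r⌋ = ((a j : ℕ) : ℤ))).card * b ^ (r * s)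
          = N) ∧ b ^ (r * s) ∣ N) ∧
    (N < b ^ (r * s) →
      ¬ (∀ k : Fin s → Fin (b ^ r), (∃ j, (k j : ℕ) ≠ 0) →
          ∑ h, walVec b (fun j => (k j : ℕ)) (P h) = 0)) := by
  have hcount := fun hD => card_cell_mul_pow_eq_of_dual_trivial (r := r) hb hP hD
  have hdvd := fun hD => Dvd.intro_left _ (hcount hD (fun _ => ⟨0, by positivity⟩))
  exact ⟨fun hD => ⟨hcount hD, hdvd hD⟩,
    fun hlt hD => (Nat.le_of_dvd hN (hdvd hD)).not_gt hlt⟩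

/-- If the dual set `D_r(P)` equals `{0}` (all Walsh coefficients `c_k` with `k ≠ 0` vanish),
then every elementary interval `E_a` contains exactly `N b^{-rs}` points of `P`, and in
particular `b^{rs}` divides `N`.  Consequently, if `b^{rs} > N` then `D_r(P) ≠ {0}`. -/
theorem trivial_dual_set (b r s N : ℕ) (hb : 2 ≤ b) (hr : 1 ≤ r) (hs : 1 ≤ s) (hN : 1 ≤ N)
    (P : Fin N → Fin s → ℝ) (hP : ∀ h j, P h j ∈ Set.Ico (0 : ℝ) 1) :
    ((∀ k : Fin s → Fin (b ^ r), (∃ j, (k j : ℕ) ≠ 0) →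
        ∑ h, walVec b (fun j => (k j : ℕ)) (P h) = 0) →
      (∀ a : Fin s → Fin (b ^ r),
        (Finset.univ.filter
          (fun h : Fin N => ∀ j, ⌊P h j * (b : ℝ) ^ r⌋ = ((a j : ℕ) : ℤ))).card * b ^ (r * s)
          = N) ∧ b ^ (r * s) ∣ N) ∧
    (N < b ^ (r * s) →
      ¬ (∀ k : Fin s → Fin (b ^ r), (∃ j, (k j : ℕ) ≠ 0) →
          ∑ h, walVec b (fun j => (k j : ℕ)) (P h) = 0)) :=
  trivial_dual_set_general b r s N hb hN P hP
end

section
/- Let {0} = N'_0 ⊂ N'_1 ⊂ ... ⊂ N'_r = F_q^{n's'} be a chain of linear [s',n',α',k'_u,δ'_u]_q-spaces with generating vectors v_1,...,v_{n's'} such that N'_u = span(v_1,...,v_{k'_u}), and let N_u ⊆ F_{q_u}^{ns} be ((s,n),α,K_u,δ_u)_{q_u}-spaces with q_u = q^{e_u}, e_u = k'_u − k'_{u−1}. Then the concatenated space N = {∑_{u=1}^r φ_u(x_u) : x_u ∈ N_u}, where φ_u replaces each F_{q_u}-symbol by the corresponding F_q-linear combination of v_{k'_{u−1}+1},...,v_{k'_u}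 with the interleaved column arrangement, is an ((ss', nn'), αα', K_1···K_r, δ)_q-space with δ ≥ min over u with |N_u| > 1 of δ_u δ'_u; in particular N has exactly K_1···K_r elements. -/
/-- Sum of the `α` largest elements of a finite set of naturals. -/
def topSum (α : ℕ) (T : Finset ℕ) : ℕ := ((T.sort (· ≤ ·)).reverse.take α).sum

/-- The higher order weight `μ_{α,n}` of a single block `a ∈ G^n` (a symbol is "nonzero"
if it is a nonzero element of `G`). -/
def muBlock (α : ℕ) {G : Type*} [Zero G] [DecidableEq G] {n : ℕ} (a : Fin n → G) : ℕ :=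
  topSum α ((Finset.univ.filter (fun i => a i ≠ 0)).image (fun i : Fin n => (i : ℕ) + 1))

/-- The higher order weight `μ_{α,n}` on `G^{ns}`, extended additively over the `s` blocks. -/
def muWt (α : ℕ) {G : Type*} [Zero G] [DecidableEq G] {s n : ℕ} (A : Fin s → Fin n → G) : ℕ :=
  ∑ j, muBlock α (A j)

/-- First component of the index `c = (a-1)·q + a'` (`0`-based). -/
def unpair1 {p q : ℕ} (c : Fin (p * q)) : Fin p :=
  ⟨(c : ℕ) / q, Nat.div_lt_of_lt_mul (Nat.mul_comm p q ▸ c.isLt)⟩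

/-- Second component of the index `c = (a-1)·q + a'` (`0`-based). -/
def unpair2 {p q : ℕ} (c : Fin (p * q)) : Fin q :=
  ⟨(c : ℕ) % q, by
    rcases Nat.eq_zero_or_pos q with h | h
    · exact absurd c.isLt (by simp [h])
    · exact Nat.mod_lt _ h⟩

/-- The map `φ_u`: each `F_{q_u}`-symbol of an outer word (regarded as a vector of length
`e_u` over `F`) is replaced by the corresponding linear combination of the inner generating
vectors `v_{off+1}, …, v_{off+e_u}`, with the interleaved column arrangement: column
`(a', τ')` of the inner word and column `(a, τ)` of the outer word determine column
`((a-1)s' + a', (τ-1)n' + τ')` of the result. -/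
def phiMap (F : Type*) [Field F] {s n s' n' e : ℕ} (v : ℕ → Fin s' → Fin n' → F) (off : ℕ)
    (x : Fin s → Fin n → (Fin e → F)) : Fin (s * s') → Fin (n * n') → F :=
  fun c d => ∑ i : Fin e, x (unpair1 c) (unpair1 d) i * v (off + (i : ℕ)) (unpair2 c) (unpair2 d)

/-- The concatenated space `N = {∑_{u=1}^r φ_u(x_u) : x_u ∈ N_u}`. -/
def concatSet (F : Type*) [Field F] {s n s' n' : ℕ} (r : ℕ) (k' : ℕ → ℕ)
    (v : ℕ → Fin s' → Fin n' → F)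
    (Nout : (u : Fin r) → Set (Fin s → Fin n → (Fin (k' ((u : ℕ) + 1) - k' (u : ℕ)) → F))) :
    Set (Fin (s * s') → Fin (n * n') → F) :=
  {z | ∃ x : (u : Fin r) → (Fin s → Fin n → (Fin (k' ((u : ℕ) + 1) - k' (u : ℕ)) → F)),
    (∀ u, x u ∈ Nout u) ∧ z = ∑ u : Fin r, phiMap F v (k' (u : ℕ)) (x u)}

/-!
Linear independence of the generators `v_i` makes `x ↦ ∑_u φ_u(x_u)` injective, which gives
the size. For two distinct outer tuples let `u` be the last layer in which they differ. In an
outer row `a`, every outer column `τ` in which their `u`-th components differ yields a nonzero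
inner word of `N'_u = span(v_1, …, v_{k'_u})`, hence of weight at least `δ'_u`, and in each of
the `s'` rows of the concatenated word coming from row `a` its nonzero positions reappear shifted
by `(τ - 1) n'`. Keeping the at most `α` heaviest such columns, and in each of them the at most
`α'` heaviest inner positions, selects at most `αα'` positions per row; since
`t + (τ - 1) n' ≥ τ t` for `t ≤ n'`, their total is at least `δ'_u μ_α(x_u - x'_u) ≥ δ_u δ'_u`.
-/

open Finset

lemma sort_ge_eq_reverse_sort {α : Type*} [LinearOrder α] (T : Finset α) :
    T.sort (· ≥ ·) = (T.sort (· ≤ ·)).reverse :=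
  (sortedGT_sort T).eq_reverse_of_mem_iff_of_sortedLT (by simp) (sortedLT_sort T)

lemma topSum_succ (k : ℕ) (T : Finset ℕ) (hT : T.Nonempty) :
    topSum (k + 1) T = T.max' hT + topSum k (T.erase (T.max' hT)) := by
  have hsort : T.sort (· ≥ ·) = T.max' hT :: (T.erase (T.max' hT)).sort (· ≥ ·) := by
    conv_lhs => rw [← insert_erase (T.max'_mem hT)]
    exact sort_insert _ (fun b hb => T.le_max' b (mem_of_mem_erase hb)) (notMem_erase _ _)
  simp only [topSum, ← sort_ge_eq_reverse_sort, hsort, List.take_succ_cons, List.sum_cons]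

lemma exists_subset_sum_eq_topSum (k : ℕ) (T : Finset ℕ) :
    ∃ S ⊆ T, #S ≤ k ∧ ∑ x ∈ S, x = topSum k T := by
  induction k generalizing T with
  | zero => exact ⟨∅, empty_subset T, by simp, by simp [topSum]⟩
  | succ k ih =>
    rcases T.eq_empty_or_nonempty with rfl | hT
    · exact ⟨∅, subset_refl _, by simp, by simp [topSum]⟩
    obtain ⟨S, hST, hS, hsum⟩ := ih (T.erase (T.max' hT))
    refine ⟨insert (T.max' hT) S, insert_subset (T.max'_mem hT) (hST.trans (erase_subset _ _)),
      (card_insert_le _ _).trans (by omega), ?_⟩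
    rw [sum_insert fun h => notMem_erase _ _ (hST h), topSum_succ k T hT, hsum]

lemma sum_le_topSum {k : ℕ} {S T : Finset ℕ} (hST : S ⊆ T) (hS : #S ≤ k) :
    ∑ x ∈ S, x ≤ topSum k T := by
  induction k generalizing S T with
  | zero => simp_all
  | succ k ih =>
    rcases S.eq_empty_or_nonempty with rfl | hSne
    · simp
    have hT : T.Nonempty := hSne.mono hST
    have hle : S.max' hSne ≤ T.max' hT := T.le_max' _ (hST (S.max'_mem hSne))
    have herase : S.erase (S.max' hSne) ⊆ T.erase (T.max' hT) := by
      intro y hy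
      refine mem_erase.2 ⟨fun hyT => ?_, hST (mem_of_mem_erase hy)⟩
      exact (mem_erase.1 hy).1 (le_antisymm (S.le_max' y (mem_of_mem_erase hy)) (hyT ▸ hle))
    calc ∑ x ∈ S, x = S.max' hSne + ∑ x ∈ S.erase (S.max' hSne), x :=
          (add_sum_erase _ _ (S.max'_mem hSne)).symm
      _ ≤ T.max' hT + topSum k (T.erase (T.max' hT)) :=
          add_le_add hle (ih herase (by rw [card_erase_of_mem (S.max'_mem hSne)]; omega))
      _ = topSum (k + 1) T := (topSum_succ k T hT).symm

lemma topSum_mono {k l : ℕ} {S T : Finset ℕ} (hkl : k ≤ l) (hST : S ⊆ T) :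
    topSum k S ≤ topSum l T := by
  obtain ⟨S₀, hS₀, hcard, hsum⟩ := exists_subset_sum_eq_topSum k S
  exact hsum ▸ sum_le_topSum (hS₀.trans hST) (hcard.trans hkl)

lemma mul_topSum_le_topSum_image_add {k b : ℕ} (t : ℕ) {T : Finset ℕ} (hT : ∀ x ∈ T, x ≤ b) :
    (t + 1) * topSum k T ≤ topSum k (T.image (· + t * b)) := by
  obtain ⟨S, hST, hS, hsum⟩ := exists_subset_sum_eq_topSum k T
  calc (t + 1) * topSum k T = ∑ x ∈ S, (x + t * x) := by
        rw [← hsum, mul_sum]; exact sum_congr rfl fun x _ => by ring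
    _ ≤ ∑ x ∈ S, (x + t * b) := sum_le_sum fun x hx => by gcongr; exact hT x (hST hx)
    _ = ∑ y ∈ S.image (· + t * b), y := by rw [sum_image fun x _ y _ h => by simpa using h]
    _ ≤ topSum k (T.image (· + t * b)) :=
        sum_le_topSum (image_subset_image hST) (card_image_le.trans hS)

lemma sum_topSum_le_topSum_biUnion {ι : Type*} [DecidableEq ι] (k : ℕ) (I : Finset ι)
    (R : ι → Finset ℕ) (hR : (I : Set ι).PairwiseDisjoint R) :
    ∑ i ∈ I, topSum k (R i) ≤ topSum (#I * k) (I.biUnion R) := by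
  choose D hDR hD hDsum using fun i => exists_subset_sum_eq_topSum k (R i)
  have hdisj : (I : Set ι).PairwiseDisjoint D := hR.mono fun i => hDR i
  calc ∑ i ∈ I, topSum k (R i) = ∑ x ∈ I.biUnion D, x := by
        rw [sum_biUnion hdisj]; exact sum_congr rfl fun i _ => (hDsum i).symm
    _ ≤ topSum (#I * k) (I.biUnion R) := by
        refine sum_le_topSum (biUnion_mono fun i _ => hDR i) ?_
        calc #(I.biUnion D) ≤ ∑ i ∈ I, #(D i) := card_biUnion_le
          _ ≤ #I * k := by simpa using sum_le_sum fun i (_ : i ∈ I) => hD i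

section Blocks

variable {G : Type*}

def flattenBlocks {n n' : ℕ} (f : Fin n → Fin n' → G) : Fin (n * n') → G :=
  fun d => f (unpair1 d) (unpair2 d)

lemma unpair1_finProdFinEquiv {p q : ℕ} (ab : Fin p × Fin q) :
    unpair1 (finProdFinEquiv ab) = ab.1 := by
  have : unpair1 (finProdFinEquiv ab) = (finProdFinEquiv.symm (finProdFinEquiv ab)).1 := rfl
  rw [this, Equiv.symm_apply_apply]

lemma unpair2_finProdFinEquiv {p q : ℕ} (ab : Fin p × Fin q) :
    unpair2 (finProdFinEquiv ab) = ab.2 := by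
  have : unpair2 (finProdFinEquiv ab) = (finProdFinEquiv.symm (finProdFinEquiv ab)).2 := rfl
  rw [this, Equiv.symm_apply_apply]

lemma flattenBlocks_finProdFinEquiv {n n' : ℕ} (f : Fin n → Fin n' → G) (τ : Fin n)
    (τ' : Fin n') :
    flattenBlocks f (finProdFinEquiv (τ, τ')) = f τ τ' := by
  rw [flattenBlocks, unpair1_finProdFinEquiv, unpair2_finProdFinEquiv]

variable [Zero G] [DecidableEq G]

def supportPositions {n : ℕ} (a : Fin n → G) : Finset ℕ :=
  (univ.filter fun i => a i ≠ 0).image fun i : Fin n => (i : ℕ) + 1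

lemma mem_supportPositions {n : ℕ} {a : Fin n → G} {x : ℕ} :
    x ∈ supportPositions a ↔ ∃ i : Fin n, a i ≠ 0 ∧ (i : ℕ) + 1 = x := by
  simp [supportPositions]

lemma image_add_mul_subset_supportPositions_flattenBlocks {n n' : ℕ} (f : Fin n → Fin n' → G)
    (τ : Fin n) :
    (supportPositions (f τ)).image (· + τ * n') ⊆ supportPositions (flattenBlocks f) := by
  intro x hx
  obtain ⟨_, ⟨τ', hτ', rfl⟩, rfl⟩ := by simpa only [mem_image, mem_supportPositions] using hx
  refine mem_supportPositions.2 ⟨finProdFinEquiv (τ, τ'), ?_, ?_⟩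
  · rwa [flattenBlocks_finProdFinEquiv]
  · simp only [finProdFinEquiv_apply_val]; ring

lemma pairwiseDisjoint_image_add_mul_supportPositions {n n' : ℕ} (f : Fin n → Fin n' → G)
    (P : Set (Fin n)) :
    P.PairwiseDisjoint fun τ => (supportPositions (f τ)).image (· + τ * n') := by
  have hmem : ∀ τ x, x ∈ (supportPositions (f τ)).image (· + τ * n') →
      (τ : ℕ) * n' < x ∧ x ≤ (τ + 1) * n' := by
    intro τ x hx
    obtain ⟨_, ⟨τ', -, rfl⟩, rfl⟩ := by simpa only [mem_image, mem_supportPositions] using hx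
    constructor <;> nlinarith [τ'.isLt]
  intro τ _ σ _ hτσ
  refine disjoint_left.2 fun x hxτ hxσ => hτσ (Fin.ext ?_)
  obtain ⟨h1, h2⟩ := hmem τ x hxτ
  obtain ⟨h3, h4⟩ := hmem σ x hxσ
  by_contra hne
  rcases Nat.lt_or_gt_of_ne hne with h | h
  · nlinarith
  · nlinarith

lemma exists_subset_sum_eq_muBlock {n : ℕ} (α : ℕ) (a : Fin n → G) :
    ∃ T : Finset (Fin n), (∀ τ ∈ T, a τ ≠ 0) ∧ #T ≤ α ∧
      muBlock α a = ∑ τ ∈ T, ((τ : ℕ) + 1) := by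
  obtain ⟨S, hS, hcard, hsum⟩ := exists_subset_sum_eq_topSum α (supportPositions a)
  obtain ⟨T, hT, rfl⟩ := subset_image_iff.1 hS
  have hinj : Set.InjOn (fun τ : Fin n => (τ : ℕ) + 1) T :=
    fun x _ y _ h => Fin.ext (by simpa using h)
  refine ⟨T, fun τ hτ => (mem_filter.1 (hT hτ)).2,
    (card_image_of_injOn hinj).symm.trans_le hcard, ?_⟩
  rw [sum_image hinj] at hsum
  exact hsum.symm

lemma mul_muBlock_le_sum_muBlock_flattenBlocks {E : Type*} [Zero E] [DecidableEq E]
    {n s' n' : ℕ} {α α' δ : ℕ} (y : Fin n → E) (w : Fin n → Fin s' → Fin n' → G)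
    (hw : ∀ τ, y τ ≠ 0 → δ ≤ muWt α' (w τ)) :
    δ * muBlock α y ≤ ∑ a', muBlock (α * α') (flattenBlocks fun τ => w τ a') := by
  obtain ⟨T, hTy, hTα, hsum⟩ := exists_subset_sum_eq_muBlock α y
  set chunk : Fin s' → Fin n → Finset ℕ :=
    fun a' τ => (supportPositions (w τ a')).image (· + τ * n')
  calc δ * muBlock α y = ∑ τ ∈ T, (τ + 1) * δ := by rw [hsum, mul_sum]; simp only [mul_comm]
    _ ≤ ∑ τ ∈ T, ∑ a', (τ + 1) * muBlock α' (w τ a') := by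
        refine sum_le_sum fun τ hτ => ?_
        rw [← mul_sum]
        exact Nat.mul_le_mul_left _ (hw τ (hTy τ hτ))
    _ ≤ ∑ τ ∈ T, ∑ a', topSum α' (chunk a' τ) := by
        refine sum_le_sum fun τ _ => sum_le_sum fun a' _ => ?_
        refine mul_topSum_le_topSum_image_add _ fun x hx => ?_
        obtain ⟨τ', -, rfl⟩ := mem_supportPositions.1 hx
        exact τ'.isLt
    _ = ∑ a', ∑ τ ∈ T, topSum α' (chunk a' τ) := sum_comm
    _ ≤ ∑ a', topSum (#T * α') (T.biUnion (chunk a')) :=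
        sum_le_sum fun a' _ => sum_topSum_le_topSum_biUnion α' T _
          (pairwiseDisjoint_image_add_mul_supportPositions (fun τ => w τ a') _)
    _ ≤ ∑ a', muBlock (α * α') (flattenBlocks fun τ => w τ a') :=
        sum_le_sum fun a' _ => topSum_mono (Nat.mul_le_mul_right α' hTα) (biUnion_subset.2
          fun τ _ => image_add_mul_subset_supportPositions_flattenBlocks (fun τ => w τ a') τ)

end Blocks

section Concatenation

variable {F : Type*} [Field F] {s n s' n' r : ℕ}

def layerIndex (k' : ℕ → ℕ) (p : (u : Fin r) × Fin (k' ((u : ℕ) + 1) - k' (u : ℕ))) : ℕ :=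
  k' (p.1 : ℕ) + (p.2 : ℕ)

def innerCodeword (v : ℕ → Fin s' → Fin n' → F) (k' : ℕ → ℕ)
    (c : (u : Fin r) → Fin (k' ((u : ℕ) + 1) - k' (u : ℕ)) → F) : Fin s' → Fin n' → F :=
  ∑ u : Fin r, ∑ i, c u i • v (k' (u : ℕ) + (i : ℕ))

def concatMap (v : ℕ → Fin s' → Fin n' → F) (k' : ℕ → ℕ)
    (x : (u : Fin r) → Fin s → Fin n → Fin (k' ((u : ℕ) + 1) - k' (u : ℕ)) → F) :
    Fin (s * s') → Fin (n * n') → F :=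
  ∑ u : Fin r, phiMap F v (k' (u : ℕ)) (x u)

variable {k' : ℕ → ℕ} {v : ℕ → Fin s' → Fin n' → F}

lemma injective_layerIndex (hmono : ∀ u, u < r → k' u < k' (u + 1)) :
    Function.Injective (layerIndex (r := r) k') := by
  have hk := (strictMonoOn_Iic_of_lt_succ (ψ := k') hmono).monotoneOn
  have hbelow : ∀ (u u' : Fin r) (i : Fin (k' ((u : ℕ) + 1) - k' (u : ℕ))), u < u' →
      k' (u : ℕ) + (i : ℕ) < k' (u' : ℕ) := fun u u' i hu =>
    (show k' (u : ℕ) + i < k' ((u : ℕ) + 1) by omega).trans_le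
      (hk (Set.mem_Iic.2 (by omega)) (Set.mem_Iic.2 u'.isLt.le) (Fin.lt_def.1 hu))
  rintro ⟨u, i⟩ ⟨u', i'⟩ h
  simp only [layerIndex] at h
  obtain rfl : u = u' := by
    rcases lt_trichotomy u u' with hu | rfl | hu
    · have := hbelow u u' i hu
      omega
    · rfl
    · have := hbelow u' u i' hu
      omega
  obtain rfl : i = i' := Fin.ext (by omega)
  rfl

lemma linearIndependent_layerIndex (hmono : ∀ u, u < r → k' u < k' (u + 1))
    (hkr : k' r = n' * s') (hlin : LinearIndependent F fun i : Fin (n' * s') => v (i : ℕ)) :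
    LinearIndependent F (v ∘ layerIndex (r := r) k') := by
  have hk := (strictMonoOn_Iic_of_lt_succ (ψ := k') hmono).monotoneOn
  let index (p : (u : Fin r) × Fin (k' ((u : ℕ) + 1) - k' (u : ℕ))) : Fin (n' * s') :=
    ⟨layerIndex k' p, by
      have : k' ((p.1 : ℕ) + 1) ≤ k' r :=
        hk (Set.mem_Iic.2 p.1.isLt) (Set.mem_Iic.2 le_rfl) p.1.isLt
      simp only [layerIndex]
      omega⟩
  exact hlin.comp index fun p q h => injective_layerIndex hmono (Fin.val_eq_of_eq h)

lemma eq_zero_of_innerCodeword_eq_zero (hmono : ∀ u, u < r → k' u < k' (u + 1))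
    (hkr : k' r = n' * s') (hlin : LinearIndependent F fun i : Fin (n' * s') => v (i : ℕ))
    {c : (u : Fin r) → Fin (k' ((u : ℕ) + 1) - k' (u : ℕ)) → F}
    (hc : innerCodeword v k' c = 0) : c = 0 := by
  have hsum : ∑ p : (u : Fin r) × Fin (k' ((u : ℕ) + 1) - k' (u : ℕ)),
      c p.1 p.2 • v (layerIndex k' p) = 0 := by
    rw [Fintype.sum_sigma]
    exact hc
  have hli := linearIndependent_layerIndex (v := v) hmono hkr hlin
  funext u i
  exact Fintype.linearIndependent_iff.1 hli (fun p => c p.1 p.2) hsum ⟨u, i⟩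

lemma innerCodeword_mem_span (hmono : ∀ u, u < r → k' u < k' (u + 1))
    {c : (u : Fin r) → Fin (k' ((u : ℕ) + 1) - k' (u : ℕ)) → F} (u₀ : Fin r)
    (hc : ∀ u, u₀ < u → c u = 0) :
    innerCodeword v k' c ∈ Submodule.span F (v '' {i | i < k' ((u₀ : ℕ) + 1)}) := by
  have hk := (strictMonoOn_Iic_of_lt_succ (ψ := k') hmono).monotoneOn
  refine Submodule.sum_mem _ fun u _ => ?_
  rcases lt_or_ge u₀ u with hu | hu
  · simp [hc u hu]
  refine Submodule.sum_mem _ fun i _ => Submodule.smul_mem _ _ (Submodule.subset_span ⟨_, ?_, rfl⟩)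
  have : k' ((u : ℕ) + 1) ≤ k' ((u₀ : ℕ) + 1) :=
    hk (Set.mem_Iic.2 u.isLt) (Set.mem_Iic.2 u₀.isLt) (Nat.succ_le_succ (Fin.le_def.1 hu))
  change k' (u : ℕ) + (i : ℕ) < k' ((u₀ : ℕ) + 1)
  omega

lemma concatMap_finProdFinEquiv
    (x : (u : Fin r) → Fin s → Fin n → Fin (k' ((u : ℕ) + 1) - k' (u : ℕ)) → F)
    (a : Fin s) (a' : Fin s') :
    concatMap v k' x (finProdFinEquiv (a, a')) =
      flattenBlocks fun τ => innerCodeword v k' (fun u => x u a τ) a' := by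
  funext d
  simp [concatMap, innerCodeword, phiMap, flattenBlocks, Finset.sum_apply,
    unpair1_finProdFinEquiv, unpair2_finProdFinEquiv]

lemma concatMap_sub
    (x x' : (u : Fin r) → Fin s → Fin n → Fin (k' ((u : ℕ) + 1) - k' (u : ℕ)) → F) :
    concatMap v k' (x - x') = concatMap v k' x - concatMap v k' x' := by
  funext c d
  simp [concatMap, phiMap, sub_mul, sum_sub_distrib]

lemma concatMap_injective (hmono : ∀ u, u < r → k' u < k' (u + 1)) (hkr : k' r = n' * s')
    (hlin : LinearIndependent F fun i : Fin (n' * s') => v (i : ℕ)) :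
    Function.Injective (concatMap (s := s) (n := n) (r := r) v k') := by
  intro x x' h
  rw [← sub_eq_zero, ← concatMap_sub] at h
  rw [← sub_eq_zero]
  funext u a τ
  have hcol : innerCodeword v k' (fun u => (x - x') u a τ) = 0 := by
    funext a' τ'
    have := congrFun (congrFun h (finProdFinEquiv (a, a'))) (finProdFinEquiv (τ, τ'))
    rwa [concatMap_finProdFinEquiv, flattenBlocks_finProdFinEquiv] at this
  exact congrFun (eq_zero_of_innerCodeword_eq_zero hmono hkr hlin hcol) u

lemma concatSet_eq_image
    (Nout : (u : Fin r) → Set (Fin s → Fin n → (Fin (k' ((u : ℕ) + 1) - k' (u : ℕ)) → F))) :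
    concatSet F r k' v Nout = concatMap v k' '' Set.univ.pi Nout := by
  ext z
  simp [concatSet, concatMap, eq_comm]

lemma ncard_concatSet (hmono : ∀ u, u < r → k' u < k' (u + 1)) (hkr : k' r = n' * s')
    (hlin : LinearIndependent F fun i : Fin (n' * s') => v (i : ℕ))
    (Nout : (u : Fin r) → Set (Fin s → Fin n → (Fin (k' ((u : ℕ) + 1) - k' (u : ℕ)) → F))) :
    (concatSet F r k' v Nout).ncard = ∏ u, (Nout u).ncard := by
  rw [concatSet_eq_image, Set.ncard_image_of_injective _ (concatMap_injective hmono hkr hlin),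
    ← Nat.card_coe_set_eq, Nat.card_congr (Equiv.Set.univPi Nout), Nat.card_pi]
  simp only [Nat.card_coe_set_eq]

lemma mul_muWt_le_muWt_concatMap [DecidableEq F] (hmono : ∀ u, u < r → k' u < k' (u + 1))
    (hkr : k' r = n' * s') (hlin : LinearIndependent F fun i : Fin (n' * s') => v (i : ℕ))
    {α α' δ : ℕ}
    (y : (u : Fin r) → Fin s → Fin n → Fin (k' ((u : ℕ) + 1) - k' (u : ℕ)) → F) (u₀ : Fin r)
    (hy : ∀ u, u₀ < u → y u = 0)
    (hδ : ∀ w ∈ Submodule.span F (v '' {i | i < k' ((u₀ : ℕ) + 1)}), w ≠ 0 → δ ≤ muWt α' w) :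
    δ * muWt α (y u₀) ≤ muWt (α * α') (concatMap v k' y) := by
  have hrow : ∀ a, δ * muBlock α (y u₀ a) ≤
      ∑ a', muBlock (α * α') (concatMap v k' y (finProdFinEquiv (a, a'))) := by
    intro a
    simp only [concatMap_finProdFinEquiv]
    refine mul_muBlock_le_sum_muBlock_flattenBlocks _ _ fun τ hτ => hδ _ ?_ fun h0 => hτ ?_
    · exact innerCodeword_mem_span hmono u₀ fun u hu => by simp [hy u hu]
    · exact congrFun (eq_zero_of_innerCodeword_eq_zero hmono hkr hlin h0) u₀
  calc δ * muWt α (y u₀) = ∑ a, δ * muBlock α (y u₀ a) := mul_sum _ _ _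
    _ ≤ ∑ a, ∑ a', muBlock (α * α') (concatMap v k' y (finProdFinEquiv (a, a'))) :=
        sum_le_sum fun a _ => hrow a
    _ = muWt (α * α') (concatMap v k' y) := by
        rw [muWt, ← Fintype.sum_prod_type']
        exact Fintype.sum_equiv finProdFinEquiv _ _ fun _ => rfl

end Concatenation

lemma exists_ne_zero_forall_lt_eq_zero {ι : Type*} [Fintype ι] [LinearOrder ι] {β : ι → Type*}
    [∀ i, Zero (β i)] {y : (i : ι) → β i} (hy : y ≠ 0) :
    ∃ i, y i ≠ 0 ∧ ∀ j, i < j → y j = 0 := by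
  classical
  obtain ⟨i, hi⟩ := Function.ne_iff.1 hy
  set S := univ.filter fun j => y j ≠ 0
  have hS : S.Nonempty := ⟨i, mem_filter.2 ⟨mem_univ i, hi⟩⟩
  refine ⟨S.max' hS, (mem_filter.1 (S.max'_mem hS)).2, fun j hj => ?_⟩
  by_contra hne
  exact (S.le_max' j (mem_filter.2 ⟨mem_univ j, hne⟩)).not_gt hj

theorem blokh_zyablov_concatenation_general (F : Type*) [Field F] [DecidableEq F]
    (s n s' n' α α' r : ℕ)
    (k' : ℕ → ℕ) (hmono : ∀ u, u < r → k' u < k' (u + 1))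
    (hkr : k' r = n' * s') (v : ℕ → Fin s' → Fin n' → F)
    (hlin : LinearIndependent F (fun i : Fin (n' * s') => v (i : ℕ)))
    (δ' : ℕ → ℕ)
    (hδ' : ∀ u : ℕ, 1 ≤ u → u ≤ r →
      (∀ w ∈ Submodule.span F (v '' {i | i < k' u}), w ≠ 0 → δ' u ≤ muWt α' w) ∧
      (∃ w ∈ Submodule.span F (v '' {i | i < k' u}), w ≠ 0 ∧ muWt α' w = δ' u))
    (Nout : (u : Fin r) → Set (Fin s → Fin n → (Fin (k' ((u : ℕ) + 1) - k' (u : ℕ)) → F)))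
    (K : Fin r → ℕ) (hfin : ∀ u, (Nout u).Finite)
    (hK : ∀ u, (Nout u).ncard = K u ∧ (Nout u).Nonempty)
    (δo : Fin r → ℕ)
    (hδo : ∀ u, (∀ A ∈ Nout u, ∀ B ∈ Nout u, A ≠ B → δo u ≤ muWt α (A - B)) ∧
      (1 < K u → ∃ A ∈ Nout u, ∃ B ∈ Nout u, A ≠ B ∧ muWt α (A - B) = δo u)) :
    (concatSet F r k' v Nout).ncard = ∏ u, K u ∧
      ∀ z ∈ concatSet F r k' v Nout, ∀ z' ∈ concatSet F r k' v Nout, z ≠ z' →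
        ∃ u : Fin r, 1 < K u ∧ δo u * δ' ((u : ℕ) + 1) ≤ muWt (α * α') (z - z') := by
  refine ⟨by simp only [ncard_concatSet hmono hkr hlin, fun u => (hK u).1], ?_⟩
  rintro _ ⟨x, hx, rfl⟩ _ ⟨x', hx', rfl⟩ hne
  have hxx' : x - x' ≠ 0 := sub_ne_zero.2 fun h => hne (by rw [h])
  obtain ⟨u₀, hu₀, hlast⟩ := exists_ne_zero_forall_lt_eq_zero hxx'
  have hxu : x u₀ ≠ x' u₀ := sub_ne_zero.1 hu₀
  refine ⟨u₀, (hK u₀).1 ▸ (Set.one_lt_ncard (hfin u₀)).2 ⟨_, hx u₀, _, hx' u₀, hxu⟩, ?_⟩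
  calc δo u₀ * δ' (u₀ + 1) ≤ δ' (u₀ + 1) * muWt α (x u₀ - x' u₀) := by
        rw [Nat.mul_comm]
        exact Nat.mul_le_mul_left _ ((hδo u₀).1 _ (hx u₀) _ (hx' u₀) hxu)
    _ ≤ muWt (α * α') (concatMap v k' (x - x')) :=
        mul_muWt_le_muWt_concatMap hmono hkr hlin (x - x') u₀ hlast ((hδ' _ (by omega) u₀.isLt).1)
    _ = muWt (α * α') (concatMap v k' x - concatMap v k' x') := by rw [concatMap_sub]

/-- Generalized Blokh–Zyablov concatenation: given a chain of inner linear
`[s',n',α',k'_u,δ'_u]_q`-spaces (spanned by the first `k'_u` of linearly independent vectors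
`v_1, v_2, …`) and outer `((s,n),α,K_u,δ_u)_{q^{e_u}}`-spaces, the concatenated space `N` is
an `((ss',nn'),αα',K_1⋯K_r,δ)_q`-space with `δ ≥ min_{u, |N_u|>1} δ_u δ'_u`. -/
theorem blokh_zyablov_concatenation (q : ℕ) (F : Type*) [Field F] [Fintype F] [DecidableEq F]
    (hq : Fintype.card F = q) (s n s' n' α α' r : ℕ)
    (hs : 1 ≤ s) (hn : 1 ≤ n) (hs' : 1 ≤ s') (hn' : 1 ≤ n') (hα : 1 ≤ α) (hα' : 1 ≤ α')
    (hr : 1 ≤ r) (k' : ℕ → ℕ) (hk0 : k' 0 = 0) (hmono : ∀ u, u < r → k' u < k' (u + 1))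
    (hkr : k' r = n' * s') (v : ℕ → Fin s' → Fin n' → F)
    (hlin : LinearIndependent F (fun i : Fin (n' * s') => v (i : ℕ)))
    (htop : Submodule.span F (v '' {i | i < k' r}) = ⊤)
    (δ' : ℕ → ℕ)
    (hδ' : ∀ u : ℕ, 1 ≤ u → u ≤ r →
      (∀ w ∈ Submodule.span F (v '' {i | i < k' u}), w ≠ 0 → δ' u ≤ muWt α' w) ∧
      (∃ w ∈ Submodule.span F (v '' {i | i < k' u}), w ≠ 0 ∧ muWt α' w = δ' u))
    (Nout : (u : Fin r) → Set (Fin s → Fin n → (Fin (k' ((u : ℕ) + 1) - k' (u : ℕ)) → F)))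
    (K : Fin r → ℕ) (hfin : ∀ u, (Nout u).Finite)
    (hK : ∀ u, (Nout u).ncard = K u ∧ (Nout u).Nonempty)
    (δo : Fin r → ℕ)
    (hδo : ∀ u, (∀ A ∈ Nout u, ∀ B ∈ Nout u, A ≠ B → δo u ≤ muWt α (A - B)) ∧
      (1 < K u → ∃ A ∈ Nout u, ∃ B ∈ Nout u, A ≠ B ∧ muWt α (A - B) = δo u)) :
    (concatSet F r k' v Nout).ncard = ∏ u, K u ∧
      ∀ z ∈ concatSet F r k' v Nout, ∀ z' ∈ concatSet F r k' v Nout, z ≠ z' →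
        ∃ u : Fin r, 1 < K u ∧ δo u * δ' ((u : ℕ) + 1) ≤ muWt (α * α') (z - z') :=
  blokh_zyablov_concatenation_general F s n s' n' α α' r k' hmono hkr v hlin δ' hδ' Nout K hfin hK
    δo hδo
end
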